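/- Let α be a type and let c₁, c₃, c₄, c₅ be positive natural numbers defining the cost homomorphism. For every regular language L over α, at least one of the following holds: (i) L = ∅, or L = {ε}, or L = {[a]} for some a ∈ α (in each case cost(L) = c₁); (ii) there is a regular language M with L = M∗ and cost(M) + c₃ ≤ cost(L); (iii) there are regular languages M₁, M₂ with L = M₁ · M₂ and cost(M₁) + cost(M₂) + c₄ ≤ cost(L); (iv) there are regular languages M₁, M₂ with L = M₁ ∪ M₂ and cost(M₁) + cost(M₂) + c₅ ≤ cost(L). (This is the completeness of bottom-up construction of minimal-cost regular languages.) -/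

import Mathlib

open Computability

variable {α : Type*}

/-- The cost homomorphism on regular expressions: `cost 0 = cost ε = cost (char a) = c₁`,
`cost (r * s) = cost r + cost s + c₄`, `cost (r + s) = cost r + cost s + c₅`,
`cost (r∗) = cost r + c₃`. -/
def reCost (c₁ c₃ c₄ c₅ : ℕ) : RegularExpression α → ℕ
  | RegularExpression.zero => c₁
  | RegularExpression.epsilon => c₁
  | RegularExpression.char _ => c₁
  | RegularExpression.plus r s => reCost c₁ c₃ c₄ c₅ r + reCost c₁ c₃ c₄ c₅ s + c₅
  | RegularExpression.comp r s => reCost c₁ c₃ c₄ c₅ r + reCost c₁ c₃ c₄ c₅ s + c₄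
  | RegularExpression.star r => reCost c₁ c₃ c₄ c₅ r + c₃

/-- The cost of a (regular) language: the infimum of the costs of regular expressions
denoting it. -/
noncomputable def langCost (c₁ c₃ c₄ c₅ : ℕ) (L : Language α) : ℕ :=
  sInf {c | ∃ r : RegularExpression α, r.matches' = L ∧ reCost c₁ c₃ c₄ c₅ r = c}

section Cost

variable (c₁ c₃ c₄ c₅ : ℕ)

theorem langCost_le_reCost (r : RegularExpression α) :
    langCost c₁ c₃ c₄ c₅ r.matches' ≤ reCost c₁ c₃ c₄ c₅ r :=
  Nat.sInf_le ⟨r, rfl, rfl⟩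

theorem exists_reCost_eq_langCost {L : Language α}
    (hL : ∃ r : RegularExpression α, r.matches' = L) :
    ∃ r : RegularExpression α, r.matches' = L ∧ reCost c₁ c₃ c₄ c₅ r = langCost c₁ c₃ c₄ c₅ L :=
  let ⟨r, hr⟩ := hL
  Nat.sInf_mem (s := {c | ∃ r : RegularExpression α, r.matches' = L ∧ reCost c₁ c₃ c₄ c₅ r = c})
    ⟨_, r, hr, rfl⟩

end Cost

theorem bottomUp_complete_general (c₁ c₃ c₄ c₅ : ℕ)
    (L : Language α) (hL : ∃ r : RegularExpression α, r.matches' = L) :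
    (((show Set (List α) from L) = ∅ ∨ (show Set (List α) from L) = {([] : List α)} ∨
        ∃ a : α, (show Set (List α) from L) = {[a]}) ∧ langCost c₁ c₃ c₄ c₅ L = c₁) ∨
    (∃ M : Language α, (∃ r : RegularExpression α, r.matches' = M) ∧ L = M∗ ∧
        langCost c₁ c₃ c₄ c₅ M + c₃ ≤ langCost c₁ c₃ c₄ c₅ L) ∨
    (∃ M₁ M₂ : Language α, (∃ r : RegularExpression α, r.matches' = M₁) ∧
        (∃ r : RegularExpression α, r.matches' = M₂) ∧ L = M₁ * M₂ ∧
        langCost c₁ c₃ c₄ c₅ M₁ + langCost c₁ c₃ c₄ c₅ M₂ + c₄ ≤ langCost c₁ c₃ c₄ c₅ L) ∨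
    (∃ M₁ M₂ : Language α, (∃ r : RegularExpression α, r.matches' = M₁) ∧
        (∃ r : RegularExpression α, r.matches' = M₂) ∧
        (show Set (List α) from L) = (M₁ ∪ M₂ : Set (List α)) ∧
        langCost c₁ c₃ c₄ c₅ M₁ + langCost c₁ c₃ c₄ c₅ M₂ + c₅ ≤ langCost c₁ c₃ c₄ c₅ L) := by
  -- A cheapest expression for `L` exists; its outermost constructor gives the decomposition.
  obtain ⟨r, rfl, hcost⟩ := exists_reCost_eq_langCost c₁ c₃ c₄ c₅ hL
  have hle := langCost_le_reCost c₁ c₃ c₄ c₅ (α := α)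
  cases r with
  | zero => exact .inl ⟨.inl rfl, hcost.symm⟩
  | epsilon => exact .inl ⟨.inr (.inl rfl), hcost.symm⟩
  | char a => exact .inl ⟨.inr (.inr ⟨a, rfl⟩), hcost.symm⟩
  | star r =>
    refine .inr (.inl ⟨_, ⟨r, rfl⟩, rfl, ?_⟩)
    rw [← hcost, reCost]
    grw [hle r]
  | comp r s =>
    refine .inr (.inr (.inl ⟨_, _, ⟨r, rfl⟩, ⟨s, rfl⟩, rfl, ?_⟩))
    rw [← hcost, reCost]
    grw [hle r, hle s]
  | plus r s =>
    refine .inr (.inr (.inr ⟨_, _, ⟨r, rfl⟩, ⟨s, rfl⟩, rfl, ?_⟩))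
    rw [← hcost, reCost]
    grw [hle r, hle s]

/-- Completeness of bottom-up construction of minimal-cost regular languages: every
regular language `L` is either basic (`∅`, `{ε}`, or `{[a]}`, with cost `c₁`), or is a
star, concatenation, or union of regular languages whose costs (plus the constructor
cost) bound `cost L` from below. -/
theorem bottomUp_complete (c₁ c₃ c₄ c₅ : ℕ)
    (hc₁ : 0 < c₁) (hc₃ : 0 < c₃) (hc₄ : 0 < c₄) (hc₅ : 0 < c₅)
    (L : Language α) (hL : ∃ r : RegularExpression α, r.matches' = L) :
    (((show Set (List α) from L) = ∅ ∨ (show Set (List α) from L) = {([] : List α)} ∨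
        ∃ a : α, (show Set (List α) from L) = {[a]}) ∧ langCost c₁ c₃ c₄ c₅ L = c₁) ∨
    (∃ M : Language α, (∃ r : RegularExpression α, r.matches' = M) ∧ L = M∗ ∧
        langCost c₁ c₃ c₄ c₅ M + c₃ ≤ langCost c₁ c₃ c₄ c₅ L) ∨
    (∃ M₁ M₂ : Language α, (∃ r : RegularExpression α, r.matches' = M₁) ∧
        (∃ r : RegularExpression α, r.matches' = M₂) ∧ L = M₁ * M₂ ∧
        langCost c₁ c₃ c₄ c₅ M₁ + langCost c₁ c₃ c₄ c₅ M₂ + c₄ ≤ langCost c₁ c₃ c₄ c₅ L) ∨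
    (∃ M₁ M₂ : Language α, (∃ r : RegularExpression α, r.matches' = M₁) ∧
        (∃ r : RegularExpression α, r.matches' = M₂) ∧
        (show Set (List α) from L) = (M₁ ∪ M₂ : Set (List α)) ∧
        langCost c₁ c₃ c₄ c₅ M₁ + langCost c₁ c₃ c₄ c₅ M₂ + c₅ ≤ langCost c₁ c₃ c₄ c₅ L) :=
  bottomUp_complete_general c₁ c₃ c₄ c₅ L hL
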